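/- Let d be odd and Δ ≥ 2. In the Petersen-graph ILP construction with right-hand side b (block-row j equal to Δ^{j-1}·(1,…,1)), every nonnegative integer solution x of Ax = b satisfies ‖x − z‖₁ ≥ 13·Σ_{i=1}^{(d-1)/2} Δ^{2i-1}, where z is the fractional solution taking each matching column with coefficient 1/2. -/

import Mathlib

/-!
Rows of block `0` read `∑_{M ∋ e} x_M + x_{0,e} = 1` and rows of block `j + 1` read
`x_{j+1,e} + Δ x_{j,e} = Δ^(j+1)`. The fractional solution `z` solves the latter recurrence as
well, so `x_{j,e} - z_{j,e} = (-Δ)^j x_{0,e}` and the block columns alone contribute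
`(∑_j Δ^j) · ∑_e x_{0,e}` to `‖x - z‖₁`. Any two perfect matchings of the Petersen graph share
an edge, so at most one matching column is nonzero, and it covers only `5` of the `15` edges;
hence `∑_e x_{0,e} ≥ 10`, and `10 ∑_{j<d} Δ^j ≥ 20 ∑_i Δ^(2i+1)` since `Δ ≥ 1`.
-/

/-- The Petersen graph, presented as the Kneser graph `K(5,2)`: vertices are the
2-element subsets of `Fin 5`, adjacent iff disjoint. -/
def Petersen : SimpleGraph {s : Finset (Fin 5) // s.card = 2} where
  Adj a b := Disjoint a.1 b.1
  symm := ⟨fun a b h => h.symm⟩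
  loopless := ⟨fun a h => by
    have h := Finset.disjoint_self_iff_empty _ |>.mp h
    have h2 := a.2
    rw [h] at h2
    simp at h2⟩

theorem SimpleGraph.Subgraph.IsMatching.card_verts {V : Type*} [Finite V] {G : SimpleGraph V}
    {M : G.Subgraph} (h : M.IsMatching) : Nat.card M.verts = 2 * Nat.card M.edgeSet := by
  have := Fintype.ofFinite M.edgeSet
  have hfiber (e : M.edgeSet) : Nat.card {v // h.toEdge v = e} = 2 := by
    obtain ⟨e, he⟩ := e
    induction e using Sym2.ind with
    | _ u v =>
      change Nat.card (h.toEdge ⁻¹' {⟨s(u, v), he⟩}) = 2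
      rw [h.toEdge_preimage_singleton he, Nat.card_coe_set_eq, Set.ncard_pair]
      exact fun huv => he.ne (congrArg Subtype.val huv)
  rw [← Nat.card_congr (Equiv.sigmaFiberEquiv h.toEdge), Nat.card_sigma,
    Finset.sum_const_nat fun e _ => hfiber e, Finset.card_univ, Nat.card_eq_fintype_card, mul_comm]

theorem card_sub_le_sum_of_inter_nonempty {ι κ : Type*} [Fintype ι] [Fintype κ] [DecidableEq κ]
    {S : ι → Finset κ} (hS : ∀ i j, i ≠ j → (S i ∩ S j).Nonempty) {b : ℕ}
    (hb : ∀ i, (S i).card ≤ b) {y : ι → ℤ} {t : κ → ℤ} (hy : ∀ i, 0 ≤ y i) (ht : ∀ e, 0 ≤ t e)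
    (h : ∀ e, ∑ i with e ∈ S i, y i + t e = 1) :
    (Fintype.card κ : ℤ) - b ≤ ∑ e, t e := by
  classical
  have hzero : ∀ i j, i ≠ j → y i = 0 ∨ y j = 0 := by
    intro i j hij
    obtain ⟨e, he⟩ := hS i j hij
    rw [Finset.mem_inter] at he
    have hpair : y i + y j ≤ ∑ k with e ∈ S k, y k := by
      rw [← Finset.sum_pair hij]
      refine Finset.sum_le_sum_of_subset_of_nonneg ?_ fun k _ _ => hy k
      intro k hk
      rw [Finset.mem_insert, Finset.mem_singleton] at hk
      rcases hk with rfl | rfl <;> simp [he]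
    have := h e
    have := ht e
    have := hy i
    have := hy j
    omega
  obtain ⟨T, hT, htT⟩ : ∃ T : Finset κ, T.card ≤ b ∧ ∀ e ∉ T, t e = 1 := by
    by_cases hy0 : ∃ i, y i ≠ 0
    · obtain ⟨i, hi⟩ := hy0
      refine ⟨S i, hb i, fun e he => ?_⟩
      have : ∑ k with e ∈ S k, y k = 0 := Finset.sum_eq_zero fun k hk =>
        (hzero i k (by rintro rfl; exact he (Finset.mem_filter.1 hk).2)).resolve_left hi
      linarith [h e]
    · push Not at hy0
      refine ⟨∅, by simp, fun e _ => ?_⟩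
      simpa [hy0] using h e
  calc (Fintype.card κ : ℤ) - b ≤ (Tᶜ.card : ℤ) := by
        rw [Finset.card_compl]
        have := Finset.card_le_univ T
        omega
    _ = ∑ e ∈ Tᶜ, t e := by
        rw [Finset.sum_congr rfl fun e he => htT e (Finset.mem_compl.1 he)]
        simp
    _ ≤ ∑ e, t e := Finset.sum_le_sum_of_subset_of_nonneg (Finset.subset_univ _) fun e _ _ => ht e

/-- `j ↦ if Odd j then q ^ j else 0` solves the recurrence too, so the difference is multiplied by
`-q` at each step. -/
theorem sub_ite_odd_eq_neg_pow_mul {R : Type*} [CommRing R] {n : ℕ} (q : R) (a : Fin (n + 1) → R)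
    (h : ∀ i : Fin n, a i.succ + q * a i.castSucc = q ^ ((i : ℕ) + 1)) (j : Fin (n + 1)) :
    a j - (if Odd (j : ℕ) then q ^ (j : ℕ) else 0) = (-q) ^ (j : ℕ) * a 0 := by
  induction j using Fin.induction with
  | zero => simp
  | succ i ih =>
    rw [Fin.val_castSucc] at ih
    rw [Fin.val_succ]
    rcases Nat.even_or_odd i with hi | hi
    · rw [if_neg (Nat.not_odd_iff_even.2 hi), sub_zero] at ih
      rw [if_pos hi.add_one]
      linear_combination h i - q * ih
    · rw [if_pos hi] at ih
      rw [if_neg (Nat.not_odd_iff_even.2 hi.add_one)]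
      linear_combination h i - q * ih

theorem two_mul_sum_odd_pow_le_sum_pow {R : Type*} [CommSemiring R] [PartialOrder R]
    [IsOrderedRing R] {q : R} (hq : 1 ≤ q) {k d : ℕ} (hkd : 2 * k < d) :
    2 * ∑ i ∈ Finset.range k, q ^ (2 * i + 1) ≤ ∑ j ∈ Finset.range d, q ^ j := by
  have hodd (k : ℕ) :
      2 * ∑ i ∈ Finset.range k, q ^ (2 * i + 1) ≤ ∑ j ∈ Finset.range (2 * k + 1), q ^ j := by
    induction k with
    | zero => simp
    | succ k ih =>
      rw [Finset.sum_range_succ, mul_add, show 2 * (k + 1) + 1 = 2 * k + 1 + 1 + 1 by ring,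
        Finset.sum_range_succ, Finset.sum_range_succ, add_assoc, two_mul (q ^ _)]
      exact add_le_add ih (add_le_add_right (pow_le_pow_right₀ hq (by omega)) _)
  exact (hodd k).trans <| Finset.sum_le_sum_of_subset_of_nonneg
    (Finset.range_subset_range.2 hkd) fun j _ _ => pow_nonneg (zero_le_one.trans hq) j

namespace Petersen

instance : DecidableRel Petersen.Adj := fun a b => inferInstanceAs (Decidable (Disjoint a.1 b.1))

theorem card_edgeSet_of_isPerfectMatching {M : Petersen.Subgraph} (h : M.IsPerfectMatching) :
    Nat.card M.edgeSet = 5 := by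
  have hverts : Nat.card M.verts = 10 := by
    rw [h.2.verts_eq_univ, Nat.card_univ, Nat.card_eq_fintype_card, Fintype.card_finset_len]
    rfl
  have := SimpleGraph.Subgraph.IsMatching.card_verts h.1
  omega

def label : Fin 10 → {s : Finset (Fin 5) // s.card = 2} :=
  ![⟨{0, 1}, rfl⟩, ⟨{2, 3}, rfl⟩, ⟨{0, 4}, rfl⟩, ⟨{1, 2}, rfl⟩, ⟨{3, 4}, rfl⟩,
    ⟨{2, 4}, rfl⟩, ⟨{1, 4}, rfl⟩, ⟨{1, 3}, rfl⟩, ⟨{0, 3}, rfl⟩, ⟨{0, 2}, rfl⟩]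

def labelEdges : List (Sym2 (Fin 10)) :=
  [s(0, 1), s(1, 2), s(2, 3), s(3, 4), s(4, 0), s(5, 7), s(7, 9), s(9, 6), s(6, 8), s(8, 5),
   s(0, 5), s(1, 6), s(2, 7), s(3, 8), s(4, 9)]

theorem label_bijective : Function.Bijective label := by decide

theorem adj_label_iff : ∀ i j, Petersen.Adj (label i) (label j) ↔ s(i, j) ∈ labelEdges := by
  decide

theorem labelEdges_nodup : labelEdges.Nodup := by decide

def Covers (l : List (Sym2 (Fin 10))) : Prop := ∀ v : Fin 10, ∃ e ∈ l, v ∈ e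

instance : DecidablePred Covers := fun l => inferInstanceAs (Decidable (∀ v, ∃ e ∈ l, v ∈ e))

set_option maxRecDepth 1000 in
theorem exists_mem_of_covers : ∀ l₁ ∈ labelEdges.sublistsLen 5, Covers l₁ →
    ∀ l₂ ∈ labelEdges.sublistsLen 5, Covers l₂ → ∃ e ∈ l₁, e ∈ l₂ := by
  decide +kernel

open scoped Classical in
noncomputable def labelledEdges (M : Petersen.Subgraph) : List (Sym2 (Fin 10)) :=
  labelEdges.filter fun e => e.map label ∈ M.edgeSet

theorem mem_labelledEdges {M : Petersen.Subgraph} {e : Sym2 (Fin 10)} :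
    e ∈ labelledEdges M ↔ e ∈ labelEdges ∧ e.map label ∈ M.edgeSet := by
  simp [labelledEdges]

theorem map_label_mem_labelledEdges {M : Petersen.Subgraph} {i j : Fin 10}
    (h : M.Adj (label i) (label j)) : s(i, j) ∈ labelledEdges M :=
  mem_labelledEdges.2 ⟨(adj_label_iff i j).1 (M.adj_sub h), h⟩

theorem edgeSet_eq_image_labelledEdges (M : Petersen.Subgraph) :
    M.edgeSet = Sym2.map label '' {e | e ∈ labelledEdges M} := by
  ext e
  refine ⟨fun he => ?_, ?_⟩
  · induction e using Sym2.ind with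
    | _ a b =>
      obtain ⟨i, rfl⟩ := label_bijective.2 a
      obtain ⟨j, rfl⟩ := label_bijective.2 b
      exact ⟨s(i, j), map_label_mem_labelledEdges he, rfl⟩
  · rintro ⟨e, he, rfl⟩
    exact (mem_labelledEdges.1 he).2

theorem length_labelledEdges (M : Petersen.Subgraph) :
    (labelledEdges M).length = Nat.card M.edgeSet := by
  rw [edgeSet_eq_image_labelledEdges, Nat.card_coe_set_eq,
    Set.ncard_image_of_injective _ (Sym2.map.injective label_bijective.1),
    ← List.coe_toFinset, Set.ncard_coe_finset]
  exact (List.toFinset_card_of_nodup (labelEdges_nodup.filter _)).symm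

theorem covers_labelledEdges {M : Petersen.Subgraph} (h : M.IsPerfectMatching) :
    Covers (labelledEdges M) := by
  intro i
  obtain ⟨w, hw, -⟩ := h.1 (h.2 (label i))
  obtain ⟨j, rfl⟩ := label_bijective.2 w
  exact ⟨s(i, j), map_label_mem_labelledEdges hw, Sym2.mem_mk_left i j⟩

theorem exists_mem_edgeSet_of_isPerfectMatching {M₁ M₂ : Petersen.Subgraph}
    (h₁ : M₁.IsPerfectMatching) (h₂ : M₂.IsPerfectMatching) :
    ∃ e, e ∈ M₁.edgeSet ∧ e ∈ M₂.edgeSet := by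
  have hlen {M : Petersen.Subgraph} (h : M.IsPerfectMatching) :
      labelledEdges M ∈ labelEdges.sublistsLen 5 := by
    rw [List.mem_sublistsLen, length_labelledEdges, card_edgeSet_of_isPerfectMatching h]
    exact ⟨List.filter_sublist, rfl⟩
  obtain ⟨e, he₁, he₂⟩ := exists_mem_of_covers _ (hlen h₁) (covers_labelledEdges h₁) _ (hlen h₂)
    (covers_labelledEdges h₂)
  exact ⟨e.map label, (mem_labelledEdges.1 he₁).2, (mem_labelledEdges.1 he₂).2⟩

end Petersen

open scoped Classical

/-- The `15d × (6+15d)` block matrix of the Petersen-graph construction: the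
first 6 columns are `(M; 0; …; 0)` with `M` the edge/matching incidence matrix
of the Petersen graph; the remaining `d` blocks of 15 columns contribute `I₁₅`
in block-row `j` and `Δ·I₁₅` in block-row `j+1`. -/
noncomputable def blockMatZ (d : ℕ) (Δ : ℤ) (eE : Fin 15 ≃ Petersen.edgeSet)
    (eM : Fin 6 ≃ {M : Petersen.Subgraph // M.IsPerfectMatching}) :
    Matrix (Fin (15 * d)) (Fin (6 + 15 * d)) ℤ :=
  fun r c =>
    if hc : (c : ℕ) < 6 then
      (if hr : (r : ℕ) < 15 then
        (if (eE ⟨(r : ℕ), hr⟩ : Sym2 _) ∈ (eM ⟨(c : ℕ), hc⟩).1.edgeSet then 1 else 0)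
      else 0)
    else if (r : ℕ) + 6 = (c : ℕ) then 1
    else if (r : ℕ) + 6 = (c : ℕ) + 15 then Δ else 0

/-- The right-hand side whose block-row `j` equals `Δ^(j-1) · (1,…,1) ∈ ℤ^15`. -/
def blockRhs (d : ℕ) (Δ : ℤ) : Fin (15 * d) → ℤ := fun r => Δ ^ ((r : ℕ) / 15)

/-- The fractional solution of the Petersen-graph construction: each of the 6
matching columns with coefficient `1/2`, each odd block of identity columns
(0-indexed: each even block) with coefficient `0`, and each even block `j`
(0-indexed: odd block `j'`) with coefficient `Δ^{j'}`. -/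
def fracSol (d : ℕ) (Δ : ℤ) : Fin (6 + 15 * d) → ℚ := fun c =>
  if (c : ℕ) < 6 then 1 / 2
  else if Odd (((c : ℕ) - 6) / 15) then (Δ : ℚ) ^ (((c : ℕ) - 6) / 15) else 0

def blockIndex (d : ℕ) : Fin d × Fin 15 ≃ Fin (15 * d) :=
  finProdFinEquiv.trans (finCongr (Nat.mul_comm d 15))

@[simp]
theorem blockIndex_val {d : ℕ} (j : Fin d) (e : Fin 15) :
    (blockIndex d (j, e) : ℕ) = e + 15 * j :=
  rfl

def blockCol (d : ℕ) (p : Fin d × Fin 15) : Fin (6 + 15 * d) :=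
  Fin.natAdd 6 (blockIndex d p)

@[simp]
theorem blockCol_val {d : ℕ} (j : Fin d) (e : Fin 15) :
    (blockCol d (j, e) : ℕ) = 6 + (e + 15 * j) :=
  rfl

theorem sum_castAdd_add_sum_blockCol {M : Type*} [AddCommMonoid M] (d : ℕ)
    (f : Fin (6 + 15 * d) → M) :
    ∑ c, f c = ∑ m : Fin 6, f (Fin.castAdd _ m) + ∑ p, f (blockCol d p) := by
  rw [Fin.sum_univ_add, ← (blockIndex d).sum_comp]
  rfl

noncomputable def matchingEdges (eE : Fin 15 ≃ Petersen.edgeSet)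
    (eM : Fin 6 ≃ {M : Petersen.Subgraph // M.IsPerfectMatching}) (m : Fin 6) : Finset (Fin 15) :=
  {e | (eE e : Sym2 _) ∈ (eM m).1.edgeSet}

section

variable {d : ℕ} {Δ : ℤ} {eE : Fin 15 ≃ Petersen.edgeSet}
  {eM : Fin 6 ≃ {M : Petersen.Subgraph // M.IsPerfectMatching}}

theorem matchingEdges_inter_nonempty (m m' : Fin 6) :
    (matchingEdges eE eM m ∩ matchingEdges eE eM m').Nonempty := by
  obtain ⟨E, hE, hE'⟩ :=
    Petersen.exists_mem_edgeSet_of_isPerfectMatching (eM m).2 (eM m').2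
  have hEG : E ∈ Petersen.edgeSet := (eM m).1.edgeSet_subset hE
  refine ⟨eE.symm ⟨E, hEG⟩, ?_⟩
  simp [matchingEdges, hE, hE']

theorem card_matchingEdges_le (m : Fin 6) : (matchingEdges eE eM m).card ≤ 5 := by
  rw [← Petersen.card_edgeSet_of_isPerfectMatching (eM m).2, matchingEdges,
    ← Fintype.card_subtype, ← Nat.card_eq_fintype_card]
  exact Nat.card_le_card_of_injective (fun e => ⟨eE e.1, e.2⟩) fun a b hab => by
    simp only [Subtype.mk.injEq] at hab
    exact Subtype.ext (eE.injective (Subtype.ext hab))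

theorem blockMatZ_castAdd (j : Fin d) (e : Fin 15) (m : Fin 6) :
    blockMatZ d Δ eE eM (blockIndex d (j, e)) (Fin.castAdd _ m) =
      if (j : ℕ) = 0 ∧ e ∈ matchingEdges eE eM m then 1 else 0 := by
  unfold blockMatZ
  rw [dif_pos (by simp)]
  by_cases hj : (j : ℕ) = 0
  · have hr : (blockIndex d (j, e) : ℕ) < 15 := by simp [hj]
    have he : (⟨_, hr⟩ : Fin 15) = e := Fin.ext (by simp [hj])
    rw [dif_pos hr, he]
    simp [matchingEdges, hj]
  · rw [dif_neg (by simp; omega)]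
    simp [hj]

theorem blockMatZ_blockCol (j : Fin d) (e : Fin 15) (p : Fin d × Fin 15) :
    blockMatZ d Δ eE eM (blockIndex d (j, e)) (blockCol d p) =
      if p = (j, e) then 1 else if (j : ℕ) = p.1 + 1 ∧ p.2 = e then Δ else 0 := by
  obtain ⟨j', e'⟩ := p
  unfold blockMatZ
  rw [dif_neg (by simp)]
  simp only [blockCol_val, blockIndex_val, Prod.mk.injEq, Fin.ext_iff]
  split_ifs <;> omega

theorem blockRhs_blockIndex (j : Fin d) (e : Fin 15) :
    blockRhs d Δ (blockIndex d (j, e)) = Δ ^ (j : ℕ) := by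
  simp only [blockRhs, blockIndex_val]
  congr 1
  omega

theorem fracSol_blockCol (j : Fin d) (e : Fin 15) :
    fracSol d Δ (blockCol d (j, e)) =
      if Odd (j : ℕ) then (Δ : ℚ) ^ (j : ℕ) else 0 := by
  have hj : ((blockCol d (j, e) : ℕ) - 6) / 15 = j := by simp; omega
  simp only [fracSol, hj]
  rw [if_neg (by simp)]

end

section

variable {n : ℕ} {Δ : ℤ} {eE : Fin 15 ≃ Petersen.edgeSet}
  {eM : Fin 6 ≃ {M : Petersen.Subgraph // M.IsPerfectMatching}} {x : Fin (6 + 15 * (n + 1)) → ℤ}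

theorem mulVec_blockMatZ_zero (e : Fin 15) :
    (blockMatZ (n + 1) Δ eE eM).mulVec x (blockIndex (n + 1) (0, e)) =
      ∑ m with e ∈ matchingEdges eE eM m, x (Fin.castAdd _ m) +
        x (blockCol (n + 1) (0, e)) := by
  simp only [Matrix.mulVec, dotProduct]
  rw [sum_castAdd_add_sum_blockCol]
  simp [blockMatZ_castAdd, blockMatZ_blockCol, Finset.sum_filter]

theorem mulVec_blockMatZ_succ (i : Fin n) (e : Fin 15) :
    (blockMatZ (n + 1) Δ eE eM).mulVec x (blockIndex (n + 1) (i.succ, e)) =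
      x (blockCol (n + 1) (i.succ, e)) +
        Δ * x (blockCol (n + 1) (i.castSucc, e)) := by
  simp only [Matrix.mulVec, dotProduct]
  rw [sum_castAdd_add_sum_blockCol]
  simp only [blockMatZ_castAdd, blockMatZ_blockCol, Fin.val_succ, Nat.add_one_ne_zero, false_and,
    if_false, zero_mul, Finset.sum_const_zero, zero_add, ite_mul, one_mul]
  rw [Fintype.sum_eq_add (i.succ, e) (i.castSucc, e)]
  · simp [Fin.ext_iff]
  · simp [Fin.ext_iff]
  · rintro ⟨j, e'⟩ ⟨h1, h2⟩
    simp only [ne_eq, Prod.mk.injEq, Fin.ext_iff, Fin.val_succ, Fin.val_castSucc] at h1 h2 ⊢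
    split_ifs <;> omega

theorem ten_le_sum_blockCol_zero (hx : ∀ c, 0 ≤ x c)
    (hsol : (blockMatZ (n + 1) Δ eE eM).mulVec x = blockRhs (n + 1) Δ) :
    10 ≤ ∑ e, x (blockCol (n + 1) (0, e)) := by
  have := card_sub_le_sum_of_inter_nonempty (fun m m' _ => matchingEdges_inter_nonempty m m')
    card_matchingEdges_le (fun m => hx _) (fun e => hx _) fun e => by
      rw [← mulVec_blockMatZ_zero, hsol, blockRhs_blockIndex, Fin.val_zero, pow_zero]
  simpa using this

theorem abs_sub_fracSol_blockCol (hΔ : 0 ≤ Δ) (hx : ∀ c, 0 ≤ x c)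
    (hsol : (blockMatZ (n + 1) Δ eE eM).mulVec x = blockRhs (n + 1) Δ) (j : Fin (n + 1))
    (e : Fin 15) :
    |(x (blockCol (n + 1) (j, e)) : ℚ) -
        fracSol (n + 1) Δ (blockCol (n + 1) (j, e))| =
      (Δ : ℚ) ^ (j : ℕ) * x (blockCol (n + 1) (0, e)) := by
  have hrec := sub_ite_odd_eq_neg_pow_mul (Δ : ℚ)
    (fun j => (x (blockCol (n + 1) (j, e)) : ℚ)) (fun i => by
      have hrow := congrFun hsol (blockIndex (n + 1) (i.succ, e))
      rw [mulVec_blockMatZ_succ, blockRhs_blockIndex, Fin.val_succ] at hrow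
      exact_mod_cast hrow) j
  rw [fracSol_blockCol, hrec, abs_mul, abs_pow, abs_neg, abs_of_nonneg (by exact_mod_cast hΔ),
    abs_of_nonneg (by exact_mod_cast hx _)]

end

theorem stmt14_general (d : ℕ) (Δ : ℤ) (hΔ : 2 ≤ Δ)
    (eE : Fin 15 ≃ Petersen.edgeSet)
    (eM : Fin 6 ≃ {M : Petersen.Subgraph // M.IsPerfectMatching})
    (x : Fin (6 + 15 * d) → ℤ) (hx : ∀ c, 0 ≤ x c)
    (hsol : (blockMatZ d Δ eE eM).mulVec x = blockRhs d Δ) :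
    13 * (∑ i ∈ Finset.range ((d - 1) / 2), (Δ : ℚ) ^ (2 * i + 1)) ≤
      ∑ c, |(x c : ℚ) - fracSol d Δ c| := by
  obtain _ | n := d
  · simpa using Finset.sum_nonneg fun c _ => abs_nonneg ((x c : ℚ) - fracSol 0 Δ c)
  have hq : (1 : ℚ) ≤ Δ := by exact_mod_cast (by omega : 1 ≤ Δ)
  have hodd := two_mul_sum_odd_pow_le_sum_pow hq (k := (n + 1 - 1) / 2) (d := n + 1) (by omega)
  have hsum : (0 : ℚ) ≤ ∑ i ∈ Finset.range ((n + 1 - 1) / 2), (Δ : ℚ) ^ (2 * i + 1) := by positivity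
  have hten : (10 : ℚ) ≤ ∑ e, (x (blockCol (n + 1) (0, e)) : ℚ) := by
    exact_mod_cast ten_le_sum_blockCol_zero hx hsol
  rw [sum_castAdd_add_sum_blockCol, Fintype.sum_prod_type]
  calc 13 * ∑ i ∈ Finset.range ((n + 1 - 1) / 2), (Δ : ℚ) ^ (2 * i + 1)
      ≤ ∑ j : Fin (n + 1), (Δ : ℚ) ^ (j : ℕ) * 10 := by
        rw [← Finset.sum_mul, Fin.sum_univ_eq_sum_range (fun j => (Δ : ℚ) ^ j)]
        linarith
    _ ≤ ∑ j : Fin (n + 1), ∑ e, (Δ : ℚ) ^ (j : ℕ) * x (blockCol (n + 1) (0, e)) := by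
        simp_rw [← Finset.mul_sum]
        gcongr
    _ = ∑ j, ∑ e, |(x (blockCol (n + 1) (j, e)) : ℚ) -
          fracSol (n + 1) Δ (blockCol (n + 1) (j, e))| := by
        simp_rw [abs_sub_fracSol_blockCol (by omega) hx hsol]
    _ ≤ _ := le_add_of_nonneg_left (Finset.sum_nonneg fun _ _ => abs_nonneg _)

/-- Every nonnegative integer solution `x` of the Petersen-graph ILP satisfies
`‖x − z‖₁ ≥ 13 · Σ_{i=1}^{(d-1)/2} Δ^{2i-1}`, where `z` is the fractional
solution taking each matching column with coefficient `1/2`. -/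
theorem stmt14 (d : ℕ) (hd : Odd d) (Δ : ℤ) (hΔ : 2 ≤ Δ)
    (eE : Fin 15 ≃ Petersen.edgeSet)
    (eM : Fin 6 ≃ {M : Petersen.Subgraph // M.IsPerfectMatching})
    (x : Fin (6 + 15 * d) → ℤ) (hx : ∀ c, 0 ≤ x c)
    (hsol : (blockMatZ d Δ eE eM).mulVec x = blockRhs d Δ) :
    13 * (∑ i ∈ Finset.range ((d - 1) / 2), (Δ : ℚ) ^ (2 * i + 1)) ≤
      ∑ c, |(x c : ℚ) - fracSol d Δ c| :=
  stmt14_general d Δ hΔ eE eM x hx hsol
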